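/- arXiv:2307.13068 — 5 statements merged into one kernel-verified Lean document; each statement's English description precedes it below -/
import Mathlib

section
/- Let a_{p,q} be defined by the recurrence a_{p,q} = min(p·(1 + a_{p−1,q}), q·(1 + a_{p,q−1})) with boundary conditions a_{p,1} = a_p and a_{1,q} = a_q, where a_n = n!·∑_{i=1}^{n−1} 1/i!. Then for all p ≥ 2 and q ≥ 2, a_{p,q} = a_{min(p,q)} + (min(p,q))! · a_{max(p,q)}. -/
open Nat Finset

/-- `a n = n! * ∑_{i=1}^{n-1} 1/i!` -/
noncomputable def a (n : ℕ) : ℝ := (n ! : ℝ) * ∑ i ∈ Finset.Icc 1 (n - 1), (1 : ℝ) / (i !)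


lemma a_two : a 2 = 2 := by simp [a]

lemma a_rec (n : ℕ) (hn : 2 ≤ n) : a n = n * (1 + a (n-1)) := by
  obtain ⟨m, rfl⟩ : ∃ m, n = m + 2 := ⟨n - 2, by omega⟩
  unfold a
  rw [show m + 2 - 1 = m + 1 by omega, Finset.sum_Icc_succ_top (by omega : 1 ≤ m+1)]
  rw [show m + 1 - 1 = m by omega]
  rw [show (m+2)! = (m+2) * (m+1)! from rfl]
  push_cast
  have h : ((m+1)! : ℝ) ≠ 0 := by positivity
  field_simp
  ring

lemma a_lb (p : ℕ) (hp : 3 ≤ p) : (3:ℝ)/2 * (p ! : ℝ) ≤ a p := by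
  unfold a
  have hsub : ({1, 2} : Finset ℕ) ⊆ Finset.Icc 1 (p-1) := by
    intro x hx; simp at hx; rcases hx with h | h <;> simp [Finset.mem_Icc] <;> omega
  have hle : (3:ℝ)/2 ≤ ∑ i ∈ Finset.Icc 1 (p-1), (1 : ℝ) / (i !) := by
    calc (3:ℝ)/2 = ∑ i ∈ ({1,2} : Finset ℕ), (1:ℝ)/(i !) := by norm_num
    _ ≤ _ := Finset.sum_le_sum_of_subset_of_nonneg hsub (by intros; positivity)
  nlinarith [(by exact_mod_cast Nat.factorial_pos p : (0:ℝ) < (p ! : ℝ))]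

lemma fac_split (p : ℕ) (hp : 1 ≤ p) : (p ! : ℝ) = p * ((p-1)! : ℝ) := by
  obtain ⟨m, rfl⟩ : ∃ m, p = m + 1 := ⟨p - 1, by omega⟩
  rw [show m + 1 - 1 = m by omega, Nat.factorial_succ]
  push_cast; ring

lemma apq_aux : ∀ n : ℕ, ∀ A : ℕ → ℕ → ℝ,
    (∀ p : ℕ, 1 ≤ p → A p 1 = a p) →
    (∀ q : ℕ, 1 ≤ q → A 1 q = a q) →
    (∀ p q : ℕ, 2 ≤ p → 2 ≤ q →
      A p q = min ((p : ℝ) * (1 + A (p - 1) q)) ((q : ℝ) * (1 + A p (q - 1)))) →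
    ∀ p q : ℕ, p + q ≤ n → 2 ≤ p → 2 ≤ q → p ≤ q →
      A p q = a p + (p ! : ℝ) * a q := by
  intro n
  induction n with
  | zero => intro A _ _ _ p q hn hp hq _; omega
  | succ n ih =>
    intro A hb1 hb2 hrec p q hn hp hq hpq
    have ih' := ih (fun x y => A y x)
      (fun p hp => hb2 p hp) (fun q hq => hb1 q hq)
      (fun p q hp hq => by simpa [min_comm] using hrec q p hq hp)
    have ih := ih A hb1 hb2 hrec
    rw [hrec p q hp hq]
    rcases eq_or_lt_of_le hp with hp2 | hp3
    · -- p = 2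
      rcases eq_or_lt_of_le hq with hq2 | hq3
      · -- q = 2
        rw [← hp2, ← hq2]
        norm_num [hb1 2 one_le_two, hb2 2 one_le_two, a_two]
      · -- q ≥ 3
        have h1 : A 1 q = a q := hb2 q (by omega)
        have h2 : A 2 (q-1) = a 2 + ((2:ℕ)! : ℝ) * a (q-1) :=
          ih 2 (q-1) (by omega) le_rfl (by omega) (by omega)
        rw [← hp2, h1, h2]
        have hq' : a q = q * (1 + a (q-1)) := a_rec q hq
        rw [min_eq_left (by
          have hq3' : (3:ℝ) ≤ (q:ℝ) := by exact_mod_cast hq3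
          norm_num [a_two]
          nlinarith [hq'])]
        norm_num [a_two]
        linarith [hq']
    · -- p ≥ 3
      have hfirst : A (p-1) q = a (p-1) + (((p-1):ℕ)! : ℝ) * a q :=
        ih (p-1) q (by omega) (by omega) hq (by omega)
      have hap : a p = p * (1 + a (p-1)) := a_rec p hp
      have hfp : (p ! : ℝ) = p * (((p-1):ℕ)! : ℝ) := fac_split p (by omega)
      have hfirstval : (p : ℝ) * (1 + A (p-1) q) = a p + (p ! : ℝ) * a q := by
        rw [hfirst, hap, hfp]; ring
      rcases eq_or_lt_of_le hpq with hqp | hqlt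
      · -- q = p
        subst hqp
        have hsecond : A p (p-1) = a (p-1) + (((p-1):ℕ)! : ℝ) * a p :=
          ih' (p-1) p (by omega) (by omega) hp (by omega)
        have : (p : ℝ) * (1 + A p (p-1)) = a p + (p ! : ℝ) * a p := by
          rw [hsecond, hap, hfp]; ring
        rw [hfirstval, this, min_self]
      · -- q > p
        have hsecond : A p (q-1) = a p + (p ! : ℝ) * a (q-1) :=
          ih p (q-1) (by omega) hp (by omega) (by omega)
        have haq : a q = q * (1 + a (q-1)) := a_rec q hq
        have hlb : (3:ℝ)/2 * (p ! : ℝ) ≤ a p := a_lb p (by omega)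
        have hq4 : (4:ℝ) ≤ (q:ℝ) := by exact_mod_cast (by omega : 4 ≤ q)
        have hFpos : (0:ℝ) < (p ! : ℝ) := by exact_mod_cast Nat.factorial_pos p
        rw [hfirstval, min_eq_left (by
          rw [hsecond]
          nlinarith [haq, hlb, hq4, hFpos])]

/-- If `A p q` satisfies the boundary conditions `A p 1 = a p`, `A 1 q = a q` and the
recurrence `A p q = min (p (1 + A (p-1) q)) (q (1 + A p (q-1)))` for `p, q ≥ 2`, then
`A p q = a (min p q) + (min p q)! * a (max p q)` for all `p, q ≥ 2`. -/
theorem apq_formula (A : ℕ → ℕ → ℝ)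
    (hb1 : ∀ p : ℕ, 1 ≤ p → A p 1 = a p)
    (hb2 : ∀ q : ℕ, 1 ≤ q → A 1 q = a q)
    (hrec : ∀ p q : ℕ, 2 ≤ p → 2 ≤ q →
      A p q = min ((p : ℝ) * (1 + A (p - 1) q)) ((q : ℝ) * (1 + A p (q - 1)))) :
    ∀ p q : ℕ, 2 ≤ p → 2 ≤ q →
      A p q = a (min p q) + ((min p q)! : ℝ) * a (max p q) := by
  intro p q hp hq
  rcases le_total p q with hpq | hqp
  · rw [min_eq_left hpq, max_eq_right hpq]
    exact apq_aux (p + q) A hb1 hb2 hrec p q le_rfl hp hq hpq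
  · rw [min_eq_right hqp, max_eq_left hqp]
    exact apq_aux (q + p) (fun x y => A y x)
      (fun p hp => hb2 p hp) (fun q hq => hb1 q hq)
      (fun p q hp hq => by simpa [min_comm] using hrec q p hq hp)
      q p le_rfl hq hp hqp
end

section
/- For all integers p ≥ 2, (1/p!) + (1 − 1/p)·∑_{i=1}^{p−1} 1/i! ≥ 1. -/
open Nat Finset

/-- For all `p ≥ 2`, `1/p! + (1 - 1/p) ∑_{i=1}^{p-1} 1/i! ≥ 1`. -/
theorem key_inequality (p : ℕ) (hp : 2 ≤ p) :
    (1 : ℝ) / (p !) + (1 - 1 / (p : ℝ)) * ∑ i ∈ Finset.Icc 1 (p - 1), (1 : ℝ) / (i !) ≥ 1 := by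
  induction p, hp using Nat.le_induction with
  | base =>
    norm_num [Finset.Icc_self]
  | succ p hp ih =>
    have hsum : ∑ i ∈ Finset.Icc 1 (p + 1 - 1), (1 : ℝ) / (i !)
        = (∑ i ∈ Finset.Icc 1 (p - 1), (1 : ℝ) / (i !)) + 1 / (p !) := by
      have h2 : p + 1 - 1 = (p - 1) + 1 := by omega
      have h3 : p - 1 + 1 = p := by omega
      rw [h2, Finset.sum_Icc_succ_top (by omega), h3]
    rw [hsum]
    set S : ℝ := ∑ i ∈ Finset.Icc 1 (p - 1), (1 : ℝ) / (i !) with hS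
    have hSnn : 0 ≤ S := Finset.sum_nonneg fun i _ => by positivity
    have hF : (1 : ℝ) ≤ (p ! : ℝ) := by exact_mod_cast Nat.one_le_iff_ne_zero.mpr (Nat.factorial_ne_zero p)
    have hx : (2 : ℝ) ≤ (p : ℝ) := by exact_mod_cast hp
    have hfac : ((p + 1)! : ℝ) = ((p : ℝ) + 1) * (p ! : ℝ) := by
      push_cast [Nat.factorial_succ]
      ring
    push_cast [hfac]
    have hxpos : (0 : ℝ) < (p : ℝ) := by linarith
    have hFpos : (0 : ℝ) < (p ! : ℝ) := by linarith
    have hx1pos : (0 : ℝ) < (p : ℝ) + 1 := by linarith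
    rw [ge_iff_le, ← sub_nonneg]
    have key : 1 / (((p : ℝ) + 1) * (p ! : ℝ)) + (1 - 1 / ((p : ℝ) + 1)) * (S + 1 / (p ! : ℝ)) - 1
        = (1 / (p ! : ℝ) + (1 - 1 / (p : ℝ)) * S - 1) + S / ((p : ℝ) * ((p : ℝ) + 1)) := by
      field_simp
      ring
    rw [key]
    have h1 : 0 ≤ 1 / (p ! : ℝ) + (1 - 1 / (p : ℝ)) * S - 1 := by linarith [ih]
    have h2 : 0 ≤ S / ((p : ℝ) * ((p : ℝ) + 1)) := by positivity
    linarith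
end

section
/- Let f be the variadic function defined on finite sequences of pairs (n_i, α_i) of integers with n_i ≥ 2 and α_i ≥ 1 by f((n_1,α_1)) = α_1·a_{n_1} and f((n_1,α_1),…,(n_p,α_p)) = α_1·(a_{n_1} + n_1!·f((n_2,α_2),…,(n_p,α_p))), where a_n = n!·∑_{i=1}^{n−1} 1/i!. Then for any p ≥ 1, f((n_1,α_1),…,(n_p,α_p)) ≤ (e−1)·(∏_{i=1}^p α_i·n_i!)·∑_{i=0}^{p−1} 1/2^i. -/
open Nat Finset

/-- The variadic function `f`: `f [(n,α)] = α * a n` and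
`f ((n₁,α₁) :: t) = α₁ * (a n₁ + n₁! * f t)`. -/
noncomputable def f : List (ℕ × ℕ) → ℝ
  | [] => 0
  | x :: t => (x.2 : ℝ) * (a x.1 + ((x.1)! : ℝ) * f t)

lemma sum_inv_fact_le (m : ℕ) :
    ∑ i ∈ Finset.Icc 1 m, (1 : ℝ) / (i !) ≤ Real.exp 1 - 1 := by
  have h1 : (1:ℝ) + ∑ i ∈ Finset.Icc 1 m, (1 : ℝ) / (i !)
      = ∑ i ∈ Finset.range (m+1), (1:ℝ) / (i !) := by
    induction m with
    | zero => simp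
    | succ k ih =>
      rw [Finset.sum_range_succ, ← ih, Finset.sum_Icc_succ_top (by omega)]
      ring
  have h2 : ∑ i ∈ Finset.range (m+1), (1:ℝ) / (i !) ≤ Real.exp 1 := by
    have := Real.sum_le_exp_of_nonneg (x := 1) zero_le_one (m+1)
    simpa using this
  linarith

lemma a_le (n : ℕ) : a n ≤ (Real.exp 1 - 1) * (n ! : ℝ) := by
  rw [a, mul_comm]
  apply mul_le_mul_of_nonneg_right (sum_inv_fact_le _) (by positivity)

lemma prod_ge (t : List (ℕ × ℕ)) (h : ∀ x ∈ t, 2 ≤ x.1 ∧ 1 ≤ x.2) :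
    (2:ℝ)^t.length ≤ (t.map fun x => (x.2 : ℝ) * ((x.1)! : ℝ)).prod := by
  induction t with
  | nil => simp
  | cons x t ih =>
    simp only [List.map_cons, List.prod_cons, List.length_cons, pow_succ]
    have hx := h x (List.mem_cons_self)
    have h2 : (2:ℝ) ≤ (x.2 : ℝ) * ((x.1)! : ℝ) := by
      have hf : 2 ≤ (x.1)! := le_trans hx.1 (Nat.self_le_factorial _)
      calc (2:ℝ) = 1 * 2 := by ring
        _ ≤ (x.2 : ℝ) * ((x.1)! : ℝ) := by
          apply mul_le_mul (by exact_mod_cast hx.2) (by exact_mod_cast hf) (by norm_num)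
            (by positivity)
    calc (2:ℝ)^t.length * 2 ≤ (t.map fun x => (x.2 : ℝ) * ((x.1)! : ℝ)).prod * ((x.2 : ℝ) * ((x.1)! : ℝ)) := by
          apply mul_le_mul (ih fun y hy => h y (List.mem_cons_of_mem x hy)) h2 (by norm_num)
          · exact le_trans (by positivity) (ih fun y hy => h y (List.mem_cons_of_mem x hy))
      _ = _ := by ring

/-- `f ((n₁,α₁),…,(n_p,α_p)) ≤ (e-1) (∏ αᵢ nᵢ!) ∑_{i=0}^{p-1} 1/2^i`. -/
theorem f_bound (L : List (ℕ × ℕ)) (hL : L ≠ [])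
    (h : ∀ x ∈ L, 2 ≤ x.1 ∧ 1 ≤ x.2) :
    f L ≤ (Real.exp 1 - 1) * (L.map fun x => (x.2 : ℝ) * ((x.1)! : ℝ)).prod *
      ∑ i ∈ Finset.range L.length, (1 : ℝ) / 2 ^ i := by
  induction L with
  | nil => exact absurd rfl hL
  | cons x t ih =>
    have hx := h x (List.mem_cons_self)
    have he : (0:ℝ) < Real.exp 1 - 1 := by
      have := Real.exp_one_gt_d9
      linarith
    have hαn : (1:ℝ) ≤ (x.2 : ℝ) * ((x.1)! : ℝ) := by
      have hf : 1 ≤ (x.1)! := Nat.one_le_iff_ne_zero.mpr (Nat.factorial_ne_zero _)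
      calc (1:ℝ) = 1 * 1 := by ring
        _ ≤ _ := mul_le_mul (by exact_mod_cast hx.2) (by exact_mod_cast hf) (by norm_num) (by positivity)
    rcases t with _ | ⟨y, t'⟩
    · -- base case: L = [x]
      simp only [f, List.map_cons, List.map_nil, List.prod_cons, List.prod_nil, mul_one,
        List.length_cons, List.length_nil, zero_add, Finset.sum_range_one, pow_zero, mul_zero,
        add_zero]
      have h1 := a_le x.1
      have hαpos : (0:ℝ) ≤ (x.2 : ℝ) := by positivity
      calc (x.2 : ℝ) * a x.1
          ≤ (x.2 : ℝ) * ((Real.exp 1 - 1) * ((x.1)! : ℝ)) :=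
            mul_le_mul_of_nonneg_left h1 hαpos
        _ = (Real.exp 1 - 1) * ((x.2 : ℝ) * ((x.1)! : ℝ)) * (1/1) := by ring
    · -- inductive case
      set t := y :: t' with ht
      have ht' : t ≠ [] := by simp [ht]
      have iht := ih ht' (fun z hz => h z (List.mem_cons_of_mem x hz))
      set P : ℝ := (t.map fun z => (z.2 : ℝ) * ((z.1)! : ℝ)).prod with hP
      set S : ℝ := ∑ i ∈ Finset.range t.length, (1 : ℝ) / 2 ^ i with hS
      have hp : 1 ≤ t.length := by simp [ht]
      have hSval : S = 2 - 2 / 2 ^ t.length := by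
        rw [hS]
        have : ∀ i, (1:ℝ)/2^i = (1/2:ℝ)^i := by intro i; rw [div_pow]; norm_num
        simp_rw [this]
        rw [geom_sum_eq (by norm_num)]
        rw [div_pow]
        field_simp
        ring
      have hPge : (2:ℝ)^t.length ≤ P := prod_ge t (fun z hz => h z (List.mem_cons_of_mem x hz))
      have hPpos : (0:ℝ) < P := lt_of_lt_of_le (by positivity) hPge
      have hkey : 1 + P * S ≤ P * (1 + S / 2) := by
        have h2p : (0:ℝ) < 2 ^ t.length := by positivity
        have : P / 2 ^ t.length ≥ 1 := (le_div_iff₀ h2p).mpr (by linarith)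
        have hPS : P * S / 2 = P - P / 2 ^ t.length := by
          rw [hSval]; field_simp
        nlinarith
      have hsum : ∑ i ∈ Finset.range (x :: t).length, (1 : ℝ) / 2 ^ i = 1 + S / 2 := by
        rw [List.length_cons, Finset.sum_range_succ', hS]
        simp_rw [pow_succ, ← div_div]
        rw [← Finset.sum_div, pow_zero]
        ring
      have hfa : f (x :: t) = (x.2 : ℝ) * (a x.1 + ((x.1)! : ℝ) * f t) := rfl
      have step1 : f (x :: t) ≤ (Real.exp 1 - 1) * ((x.2 : ℝ) * ((x.1)! : ℝ)) * (1 + P * S) := by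
        rw [hfa]
        have h1 : a x.1 ≤ (Real.exp 1 - 1) * ((x.1)! : ℝ) := a_le x.1
        have h2 : f t ≤ (Real.exp 1 - 1) * P * S := iht
        have hfpos : (0:ℝ) ≤ ((x.1)! : ℝ) := by positivity
        have hαpos : (0:ℝ) ≤ (x.2 : ℝ) := by positivity
        calc (x.2 : ℝ) * (a x.1 + ((x.1)! : ℝ) * f t)
            ≤ (x.2 : ℝ) * ((Real.exp 1 - 1) * ((x.1)! : ℝ) + ((x.1)! : ℝ) * ((Real.exp 1 - 1) * P * S)) := by
              apply mul_le_mul_of_nonneg_left _ hαpos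
              apply add_le_add h1
              exact mul_le_mul_of_nonneg_left h2 hfpos
          _ = (Real.exp 1 - 1) * ((x.2 : ℝ) * ((x.1)! : ℝ)) * (1 + P * S) := by ring
      calc f (x :: t) ≤ (Real.exp 1 - 1) * ((x.2 : ℝ) * ((x.1)! : ℝ)) * (1 + P * S) := step1
        _ ≤ (Real.exp 1 - 1) * ((x.2 : ℝ) * ((x.1)! : ℝ)) * (P * (1 + S / 2)) := by
            apply mul_le_mul_of_nonneg_left hkey
            positivity
        _ = (Real.exp 1 - 1) * (((x :: t).map fun z => (z.2 : ℝ) * ((z.1)! : ℝ)).prod) * (1 + S/2) := by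
            rw [List.map_cons, List.prod_cons, ← hP]; ring
        _ = _ := by rw [hsum]
end

section
/- Let m > n ≥ 2 be integers and α ≥ 1. Then Δf = a_n·(α·m! − 1) − α·a_m·(n! − 1) > 0, where a_k = k!·∑_{i=1}^{k−1} 1/i!. -/
open Nat Finset

lemma a_succ (n : ℕ) (hn : 1 ≤ n) : a (n + 1) = ((n : ℝ) + 1) * (a n + 1) := by
  unfold a
  have h : n + 1 - 1 = (n - 1) + 1 := by omega
  rw [h, Finset.sum_Icc_succ_top (by omega : 1 ≤ (n - 1) + 1)]
  have h2 : (n - 1) + 1 = n := by omega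
  rw [h2]
  have hfac : ((n + 1)! : ℝ) = ((n : ℝ) + 1) * (n !) := by
    push_cast [Nat.factorial_succ]; ring
  have hne : ((n)! : ℝ) ≠ 0 := by positivity
  rw [hfac]
  field_simp

lemma a_ge_fac : ∀ n : ℕ, 2 ≤ n → (n ! : ℝ) ≤ a n := by
  intro n hn
  induction n, hn using Nat.le_induction with
  | base => rw [a_two]; norm_num [Nat.factorial]
  | succ k hk ih =>
    rw [a_succ k (by omega)]
    have hfac : ((k + 1)! : ℝ) = ((k : ℝ) + 1) * (k !) := by
      push_cast [Nat.factorial_succ]; ring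
    rw [hfac]
    have hk1 : (0 : ℝ) < (k : ℝ) + 1 := by positivity
    nlinarith

lemma a_ge_32 : ∀ n : ℕ, 3 ≤ n → (3 / 2 : ℝ) * (n !) ≤ a n := by
  intro n hn
  induction n, hn using Nat.le_induction with
  | base =>
    have : a 3 = 9 := by
      have := a_succ 2 (by norm_num)
      rw [a_two] at this
      norm_num at this
      linarith [this]
    rw [this]; norm_num [Nat.factorial]
  | succ k hk ih =>
    rw [a_succ k (by omega)]
    have hfac : ((k + 1)! : ℝ) = ((k : ℝ) + 1) * (k !) := by
      push_cast [Nat.factorial_succ]; ring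
    rw [hfac]
    have hk1 : (0 : ℝ) < (k : ℝ) + 1 := by positivity
    nlinarith

lemma fac_ge_two {n : ℕ} (hn : 2 ≤ n) : (2 : ℝ) ≤ (n ! : ℝ) := by
  have : 2 ≤ n ! := by
    calc 2 = 2 ! := rfl
    _ ≤ n ! := Nat.factorial_le hn
  exact_mod_cast this

/-- one-step: `a k * ((k+1)! - 1) > a (k+1) * (k! - 1)` for `k ≥ 2`. -/
lemma step (k : ℕ) (hk : 2 ≤ k) :
    a (k + 1) * ((k ! : ℝ) - 1) < a k * (((k + 1)! : ℝ) - 1) := by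
  rw [a_succ k (by omega)]
  have hfac : ((k + 1)! : ℝ) = ((k : ℝ) + 1) * (k !) := by
    push_cast [Nat.factorial_succ]; ring
  rw [hfac]
  -- reduces to k * a k > (k+1) * (k! - 1)
  have key : ((k : ℝ) + 1) * ((k ! : ℝ) - 1) < (k : ℝ) * a k := by
    rcases eq_or_lt_of_le hk with h | h
    · rw [← h, a_two]
      norm_num [Nat.factorial]
    · have hk3 : 3 ≤ k := h
      have h32 := a_ge_32 k hk3
      have hkr : (3 : ℝ) ≤ (k : ℝ) := by exact_mod_cast hk3
      have hfpos : (2 : ℝ) ≤ (k ! : ℝ) := fac_ge_two (by omega)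
      nlinarith
  nlinarith

/-- For `m > n ≥ 2`, `α ≥ 1`: `Δf = a n (α m! - 1) - α a m (n! - 1) > 0`. -/
theorem deltaf_pos (m n α : ℕ) (hn : 2 ≤ n) (hmn : n < m) (hα : 1 ≤ α) :
    a n * ((α : ℝ) * (m ! : ℝ) - 1) - (α : ℝ) * a m * ((n ! : ℝ) - 1) > 0 := by
  -- key inequality: a n * (m! - 1) > a m * (n! - 1)
  have key : ∀ m : ℕ, n < m → a m * ((n ! : ℝ) - 1) < a n * ((m ! : ℝ) - 1) := by
    intro m hm
    induction m, hm using Nat.le_induction with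
    | base => exact step n hn
    | succ k hk ih =>
      have hstep := step k (by omega)
      have hapos : 0 < a k := lt_of_lt_of_le (by linarith [fac_ge_two (show 2 ≤ k by omega)]) (a_ge_fac k (by omega))
      have hanpos : 0 < a n := lt_of_lt_of_le (by linarith [fac_ge_two hn]) (a_ge_fac n hn)
      have hfk : (2 : ℝ) ≤ (k ! : ℝ) := fac_ge_two (by omega)
      have hfn : (2 : ℝ) ≤ (n ! : ℝ) := fac_ge_two hn
      have hfk1 : (2 : ℝ) ≤ ((k + 1)! : ℝ) := fac_ge_two (by omega)
      nlinarith [mul_lt_mul_of_pos_left hstep hanpos, mul_pos hapos (show (0:ℝ) < (k ! : ℝ) - 1 by linarith)]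
  have hkey := key m hmn
  have hanpos : 0 < a n := lt_of_lt_of_le (by linarith [fac_ge_two hn]) (a_ge_fac n hn)
  have hα' : (1 : ℝ) ≤ (α : ℝ) := by exact_mod_cast hα
  -- X := a n * m! - a m * (n! - 1) > a n, goal is α * X - a n > 0 (after rearranging)
  have hX : a n < a n * (m ! : ℝ) - a m * ((n ! : ℝ) - 1) := by linarith
  nlinarith [mul_le_mul_of_nonneg_right hα' (le_of_lt (lt_trans hanpos hX))]
end

section
/- For every integer n ≥ 3, letting r_n = ∑_{i=n}^{∞} 1/i!, one has (n! − 1)·(1 + 1/n)·r_n/(e − 1 − r_n) < 1. -/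
open Nat Finset

/-- `r n = ∑_{i=n}^{∞} 1/i!`, the tail of the exponential series. -/
noncomputable def r (n : ℕ) : ℝ := ∑' i : ℕ, (1 : ℝ) / ((n + i)! : ℝ)

lemma summable_fac : Summable (fun i : ℕ => (1:ℝ) / (i ! : ℝ)) := by
  simpa using Real.summable_pow_div_factorial 1

lemma exp_eq_tsum_fac : Real.exp 1 = ∑' i : ℕ, (1:ℝ) / (i ! : ℝ) := by
  rw [Real.exp_eq_exp_ℝ, NormedSpace.exp_eq_tsum_div]
  simp

lemma r_eq (n : ℕ) : Real.exp 1 = (∑ i ∈ range n, (1:ℝ) / (i ! : ℝ)) + r n := by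
  rw [exp_eq_tsum_fac, r]
  simpa [add_comm] using (Summable.sum_add_tsum_nat_add n summable_fac).symm

lemma r_nonneg (n : ℕ) : 0 ≤ r n := by
  apply tsum_nonneg
  intro i
  positivity

lemma r_le (n : ℕ) (hn : 1 ≤ n) : r n ≤ 1 / (n ! : ℝ) * ((n + 1) / n) := by
  have hn0 : (0:ℝ) < n := by exact_mod_cast hn
  have hlt : (1 / ((n:ℝ) + 1)) < 1 := by
    rw [div_lt_one (by linarith)]; linarith
  have hge : (0:ℝ) ≤ 1 / ((n:ℝ) + 1) := by positivity
  have hgeo : Summable (fun i : ℕ => (1 / (n ! : ℝ)) * (1 / ((n:ℝ) + 1)) ^ i) :=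
    (summable_geometric_of_lt_one hge hlt).mul_left _
  have hle : ∀ i : ℕ, (1:ℝ) / ((n + i)! : ℝ) ≤ (1 / (n ! : ℝ)) * (1 / ((n:ℝ) + 1)) ^ i := by
    intro i
    have h := Nat.factorial_mul_pow_le_factorial (m := n) (n := i)
    have h' : ((n ! : ℝ)) * ((n:ℝ) + 1) ^ i ≤ ((n + i)! : ℝ) := by
      exact_mod_cast h
    have hb : (1:ℝ) / ((n + i)! : ℝ) ≤ 1 / ((n ! : ℝ) * ((n:ℝ) + 1) ^ i) :=
      one_div_le_one_div_of_le (by positivity) h'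
    refine hb.trans_eq ?_
    field_simp
    rw [← mul_pow, mul_one_div_cancel (by positivity), one_pow]
  have := Summable.tsum_le_tsum hle (Summable.of_nonneg_of_le (fun i => by positivity) hle hgeo) hgeo
  rw [r]
  refine this.trans_eq ?_
  rw [tsum_mul_left, tsum_geometric_of_lt_one hge hlt]
  have : (1 - 1 / ((n:ℝ) + 1))⁻¹ = ((n:ℝ) + 1) / n := by
    rw [one_sub_div (by linarith), inv_div]
    ring_nf
  rw [this]

/-- For `n ≥ 3`, `(n! - 1)(1 + 1/n) r n / (e - 1 - r n) < 1`. -/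
theorem tail_inequality (n : ℕ) (hn : 3 ≤ n) :
    ((n ! : ℝ) - 1) * (1 + 1 / (n : ℝ)) * r n / (Real.exp 1 - 1 - r n) < 1 := by
  have hn0 : (0:ℝ) < n := by positivity
  have hfac : (6:ℝ) ≤ (n ! : ℝ) := by
    have h6 : (3)! ≤ n ! := Nat.factorial_le hn
    norm_num [Nat.factorial] at h6
    exact_mod_cast h6
  have hD : Real.exp 1 - 1 - r n = (∑ i ∈ range n, (1:ℝ) / (i ! : ℝ)) - 1 := by
    rw [r_eq n]; ring
  have hSge : ∀ m, 3 ≤ m → (5:ℝ)/2 ≤ ∑ i ∈ range m, (1:ℝ) / (i ! : ℝ) := by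
    intro m hm
    calc (5:ℝ)/2 = ∑ i ∈ range 3, (1:ℝ) / (i ! : ℝ) := by
          simp [Finset.sum_range_succ]; norm_num
      _ ≤ _ := Finset.sum_le_sum_of_subset_of_nonneg
          (Finset.range_subset_range.mpr hm) (fun i _ _ => by positivity)
  have hDpos : (3:ℝ)/2 ≤ Real.exp 1 - 1 - r n := by
    rw [hD]; have := hSge n hn; linarith
  rw [div_lt_one (by linarith)]
  have hrle := r_le n (by omega)
  have hnum : ((n ! : ℝ) - 1) * (1 + 1 / (n : ℝ)) * r n ≤
      ((n ! : ℝ) - 1) / (n ! : ℝ) * ((n + 1) / n) ^ 2 := by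
    have h1 : (0:ℝ) ≤ ((n ! : ℝ) - 1) * (1 + 1 / (n : ℝ)) := by
      have : (0:ℝ) ≤ 1 / (n:ℝ) := by positivity
      nlinarith
    calc ((n ! : ℝ) - 1) * (1 + 1 / (n : ℝ)) * r n
        ≤ ((n ! : ℝ) - 1) * (1 + 1 / (n : ℝ)) * (1 / (n ! : ℝ) * ((n + 1) / n)) :=
          mul_le_mul_of_nonneg_left hrle h1
      _ = ((n ! : ℝ) - 1) / (n ! : ℝ) * ((n + 1) / n) ^ 2 := by
          field_simp
  rcases eq_or_lt_of_le hn with h3 | h4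
  · -- n = 3
    subst h3
    have hD3 : Real.exp 1 - 1 - r 3 = 3/2 := by
      rw [hD]
      have : ∑ i ∈ range 3, (1:ℝ) / (i ! : ℝ) = 5/2 := by
        simp [Finset.sum_range_succ]; norm_num
      rw [this]; norm_num
    rw [hD3]
    refine lt_of_le_of_lt hnum ?_
    norm_num [Nat.factorial]
  · -- n ≥ 4
    have hn4 : (4:ℝ) ≤ n := by exact_mod_cast h4
    have hS4 : (5:ℝ)/3 ≤ Real.exp 1 - 1 - r n := by
      rw [hD]
      have : (8:ℝ)/3 ≤ ∑ i ∈ range n, (1:ℝ) / (i ! : ℝ) := by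
        calc (8:ℝ)/3 = ∑ i ∈ range 4, (1:ℝ) / (i ! : ℝ) := by
              simp [Finset.sum_range_succ, Nat.factorial]; norm_num
          _ ≤ _ := Finset.sum_le_sum_of_subset_of_nonneg
              (Finset.range_subset_range.mpr h4) (fun i _ _ => by positivity)
      linarith
    have hstep : ((n ! : ℝ) - 1) / (n ! : ℝ) * ((n + 1) / n) ^ 2 ≤ ((n + 1 : ℝ) / n) ^ 2 ∧
        ((n + 1 : ℝ) / n) ^ 2 < 5 / 3 := by
      constructor
      · -- ≤ ((n+1)/n)^2
        have h1 : ((n ! : ℝ) - 1) / (n ! : ℝ) ≤ 1 := by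
          rw [div_le_one (by linarith)]; linarith
        have h2 : (0:ℝ) ≤ ((n + 1 : ℝ) / n) ^ 2 := by positivity
        nlinarith
      · -- ((n+1)/n)^2 < 5/3 since (n+1)/n ≤ 5/4
        have : ((n:ℝ) + 1) / n ≤ 5/4 := by
          rw [div_le_div_iff₀ hn0 (by norm_num)]; linarith
        nlinarith [div_nonneg (by linarith : (0:ℝ) ≤ (n:ℝ)+1) hn0.le]
    calc ((n ! : ℝ) - 1) * (1 + 1 / (n : ℝ)) * r n ≤ _ := hnum
      _ ≤ ((n + 1 : ℝ) / n) ^ 2 := hstep.1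
      _ < 5/3 := hstep.2
      _ ≤ _ := hS4
end
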